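/- Let N ≥ 1 and K : Fin N → ℕ with K n ≥ 1 for all n. Let f : (n : Fin N) → Fin (K n) → ℝ be per-segment execution costs and let r give resharding costs r n : Fin (K n) → Fin (K (n+1)) → ℝ for each consecutive pair of segments n, n+1. Define Bellman values V recursively by V 0 j = f 0 j and V (n+1) j = f (n+1) j + min_{k ∈ Fin (K n)} (V n k + r n k j). Then min_{j ∈ Fin (K (N−1))} V (N−1) j = min over all tuples i ∈ Π (n : Fin N), Fin (K n) of T(i) = Σ_{n=0}^{N−1} f n (i n) + Σ_{n=0}^{N−2} r n (i n) (i (n+1)). That is, the dynamic programming recursion computes the minimum total execution cost over all global parallelism plans. -/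

import Mathlib

/-!
Let `prefixCost m i` be the cost of running segments `0, …, m` under the plan `i`. By induction on
`m`, the Bellman value `V m j` is the least prefix cost `prefixCost m i` over plans with `i m = j`:
an optimal plan ending in `j` at segment `m + 1` restricts, on segments `0, …, m`, to an optimal
plan ending in some `k` (the minimiser in the recursion), and only the cost `f (m + 1) j + r m k j`
is added. At `m = N - 1` the prefix cost is the total cost, and minimising over `j` finishes.
-/

open Finset

section Bellman

variable {α : Type*} [AddCommMonoid α]
  {N : ℕ} {X : Fin N → Type*}
  (f : (n : Fin N) → X n → α)
  (r : (n : ℕ) → (h : n + 1 < N) → X ⟨n, Nat.lt_of_succ_lt h⟩ → X ⟨n + 1, h⟩ → α)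

def planCost (i : (n : Fin N) → X n) : α :=
  (∑ n : Fin N, f n (i n)) +
    ∑ n : Fin (N - 1),
      r n.val (by have := n.isLt; omega)
        (i ⟨n.val, by have := n.isLt; omega⟩) (i ⟨n.val + 1, by have := n.isLt; omega⟩)

def prefixCost : (m : ℕ) → m < N → ((n : Fin N) → X n) → α
  | 0, hm, i => f ⟨0, hm⟩ (i ⟨0, hm⟩)
  | m + 1, hm, i =>
      prefixCost m (Nat.lt_of_succ_lt hm) i + f ⟨m + 1, hm⟩ (i ⟨m + 1, hm⟩) +
        r m hm (i ⟨m, Nat.lt_of_succ_lt hm⟩) (i ⟨m + 1, hm⟩)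

theorem prefixCost_congr :
    ∀ (m : ℕ) (hm : m < N) {i i' : (n : Fin N) → X n},
      (∀ (n : ℕ) (hn : n < N), n ≤ m → i ⟨n, hn⟩ = i' ⟨n, hn⟩) →
        prefixCost f r m hm i = prefixCost f r m hm i'
  | 0, hm, _, _, h => by
    simp only [prefixCost, h 0 hm le_rfl]
  | m + 1, hm, _, _, h => by
    simp only [prefixCost, h m (Nat.lt_of_succ_lt hm) m.le_succ, h (m + 1) hm le_rfl,
      prefixCost_congr m (Nat.lt_of_succ_lt hm) fun n hn hnm => h n hn (hnm.trans m.le_succ)]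

theorem prefixCost_eq_sum :
    ∀ (m : ℕ) (hm : m < N) (i : (n : Fin N) → X n),
      prefixCost f r m hm i =
        (∑ n : Fin (m + 1), f ⟨n.val, by omega⟩ (i ⟨n.val, by omega⟩)) +
          ∑ n : Fin m, r n.val (by omega) (i ⟨n.val, by omega⟩) (i ⟨n.val + 1, by omega⟩)
  | 0, hm, i => by simp [prefixCost]
  | m + 1, hm, i => by
    simp only [prefixCost, prefixCost_eq_sum m (Nat.lt_of_succ_lt hm) i, Fin.sum_univ_castSucc,
      Fin.val_castSucc, Fin.val_last]
    abel

theorem prefixCost_last (hN : N - 1 < N) (i : (n : Fin N) → X n) :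
    prefixCost f r (N - 1) hN i = planCost f r i := by
  rw [prefixCost_eq_sum, planCost,
    ← Fin.sum_congr' (fun n : Fin N => f n (i n)) (show N - 1 + 1 = N by omega)]
  rfl

variable [LinearOrder α] [∀ n, Fintype (X n)] [∀ n, Nonempty (X n)]

structure IsBellmanValue (V : (n : Fin N) → X n → α) : Prop where
  zero : ∀ (h : 0 < N) (j : X ⟨0, h⟩), V ⟨0, h⟩ j = f ⟨0, h⟩ j
  succ : ∀ (n : ℕ) (h : n + 1 < N) (j : X ⟨n + 1, h⟩),
    V ⟨n + 1, h⟩ j = f ⟨n + 1, h⟩ j +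
      univ.inf' univ_nonempty fun k => V ⟨n, Nat.lt_of_succ_lt h⟩ k + r n h k j

variable {f r} {V : (n : Fin N) → X n → α}

theorem IsBellmanValue.exists_prefixCost_eq (hV : IsBellmanValue f r V) :
    ∀ (m : ℕ) (hm : m < N) (j : X ⟨m, hm⟩),
      ∃ i : (n : Fin N) → X n, i ⟨m, hm⟩ = j ∧ prefixCost f r m hm i = V ⟨m, hm⟩ j
  | 0, hm, j => by
    refine ⟨Function.update (fun n => Classical.arbitrary (X n)) ⟨0, hm⟩ j,
      Function.update_self .., ?_⟩
    rw [hV.zero, prefixCost, Function.update_self]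
  | m + 1, hm, j => by
    have hm' : m < N := Nat.lt_of_succ_lt hm
    obtain ⟨k, -, hk⟩ := exists_mem_eq_inf' univ_nonempty
      fun k => V ⟨m, hm'⟩ k + r m hm k j
    obtain ⟨i, hik, hi⟩ := hV.exists_prefixCost_eq m hm' k
    have hne : (⟨m, hm'⟩ : Fin N) ≠ ⟨m + 1, hm⟩ := by simp
    have hprefix :
        prefixCost f r m hm' (Function.update i ⟨m + 1, hm⟩ j) = prefixCost f r m hm' i :=
      prefixCost_congr f r m hm' fun n hn hnm =>
        Function.update_of_ne (by simp only [ne_eq, Fin.mk.injEq]; omega) _ _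
    refine ⟨Function.update i ⟨m + 1, hm⟩ j, Function.update_self .., ?_⟩
    rw [hV.succ, hk, prefixCost, hprefix, Function.update_self, Function.update_of_ne hne, hik, hi]
    abel

variable [IsOrderedAddMonoid α]

theorem IsBellmanValue.le_prefixCost (hV : IsBellmanValue f r V) :
    ∀ (m : ℕ) (hm : m < N) (i : (n : Fin N) → X n),
      V ⟨m, hm⟩ (i ⟨m, hm⟩) ≤ prefixCost f r m hm i
  | 0, hm, i => (hV.zero hm _).le
  | m + 1, hm, i => by
    have hm' : m < N := Nat.lt_of_succ_lt hm
    calc V ⟨m + 1, hm⟩ (i ⟨m + 1, hm⟩)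
        ≤ f ⟨m + 1, hm⟩ (i ⟨m + 1, hm⟩) +
            (V ⟨m, hm'⟩ (i ⟨m, hm'⟩) + r m hm (i ⟨m, hm'⟩) (i ⟨m + 1, hm⟩)) := by
          rw [hV.succ]
          exact add_le_add_right (inf'_le _ (mem_univ _)) _
      _ ≤ f ⟨m + 1, hm⟩ (i ⟨m + 1, hm⟩) +
            (prefixCost f r m hm' i + r m hm (i ⟨m, hm'⟩) (i ⟨m + 1, hm⟩)) := by
          gcongr
          exact hV.le_prefixCost m hm' i
      _ = prefixCost f r (m + 1) hm i := by
          simp only [prefixCost]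
          abel

theorem IsBellmanValue.inf'_eq_inf'_planCost (hV : IsBellmanValue f r V) (hN : N - 1 < N) :
    univ.inf' univ_nonempty (V ⟨N - 1, hN⟩) = univ.inf' univ_nonempty (planCost f r) := by
  apply le_antisymm
  · refine le_inf' _ _ fun i _ => ?_
    calc univ.inf' univ_nonempty (V ⟨N - 1, hN⟩) ≤ V ⟨N - 1, hN⟩ (i ⟨N - 1, hN⟩) :=
          inf'_le _ (mem_univ _)
      _ ≤ planCost f r i := prefixCost_last f r hN i ▸ hV.le_prefixCost _ hN i
  · obtain ⟨j, -, hj⟩ := exists_mem_eq_inf' univ_nonempty (V ⟨N - 1, hN⟩)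
    obtain ⟨i, -, hi⟩ := hV.exists_prefixCost_eq _ hN j
    rw [hj, ← hi, prefixCost_last]
    exact inf'_le _ (mem_univ _)

end Bellman

/-- The dynamic programming recursion over the sequence of `N` model segments
computes the minimum total execution cost over all global parallelism plans.
Segment `n` has plans `Fin (K n)` with profiled execution costs `f n`, and
`r n h` gives the cross-segment resharding cost between the plans of
consecutive segments `n` and `n+1`.  If the Bellman values `V` satisfy
`V 0 j = f 0 j` and
`V (n+1) j = f (n+1) j + min_k (V n k + r n k j)`, then
`min_j V (N-1) j` equals the minimum over all global plans
`i ∈ Π n, Fin (K n)` of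
`T(i) = ∑ n, f n (i n) + ∑ n, r n (i n) (i (n+1))`. -/
theorem bellman_dp_computes_min_total_cost
    (N : ℕ) (hN : 1 ≤ N) (K : Fin N → ℕ) (hK : ∀ n, 1 ≤ K n)
    (f : (n : Fin N) → Fin (K n) → ℝ)
    (r : (n : ℕ) → (h : n + 1 < N) →
      Fin (K ⟨n, Nat.lt_of_succ_lt h⟩) → Fin (K ⟨n + 1, h⟩) → ℝ)
    (V : (n : Fin N) → Fin (K n) → ℝ)
    (hV0 : ∀ j, V ⟨0, hN⟩ j = f ⟨0, hN⟩ j)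
    (hVs : ∀ (n : ℕ) (h : n + 1 < N) (j : Fin (K ⟨n + 1, h⟩)),
      V ⟨n + 1, h⟩ j = f ⟨n + 1, h⟩ j +
        Finset.univ.inf' ⟨⟨0, hK _⟩, Finset.mem_univ _⟩
          (fun k : Fin (K ⟨n, Nat.lt_of_succ_lt h⟩) =>
            V ⟨n, Nat.lt_of_succ_lt h⟩ k + r n h k j)) :
    Finset.univ.inf' ⟨⟨0, hK _⟩, Finset.mem_univ _⟩
        (V ⟨N - 1, by omega⟩) =
      Finset.univ.inf' ⟨fun n => ⟨0, hK n⟩, Finset.mem_univ _⟩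
        (fun i : ∀ n : Fin N, Fin (K n) =>
          (∑ n : Fin N, f n (i n)) +
            ∑ n : Fin (N - 1),
              r n.val (by have := n.isLt; omega)
                (i ⟨n.val, by have := n.isLt; omega⟩)
                (i ⟨n.val + 1, by have := n.isLt; omega⟩)) := by
  have : ∀ n, Nonempty (Fin (K n)) := fun n => ⟨⟨0, hK n⟩⟩
  have hV : IsBellmanValue f r V := ⟨fun _ => hV0, hVs⟩
  exact hV.inf'_eq_inf'_planCost (by omega)
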